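/- Let p ≥ 2, let V : ℤ → ℝ be periodic with period p, let k ∈ ℝ and l ∈ ℤ, and let A_l^k be the p×p complex matrix with diagonal entries V(l), V(l+1), …, V(l+p−1), entries 1 on the first sub- and superdiagonal, entry e^{−ikp} in the upper-right corner, entry e^{ikp} in the lower-left corner, and all other entries 0. Then for every E ∈ ℝ, det(E·I − A_l^k) = Δ(E) − 2cos(kp), where Δ is the discriminant of V. -/

import Mathlib

/-- The transfer matrix over `n` sites: `T_n^{(E,V)} = S_{n-1} ⋯ S_0`, where
`S_i^{(E,V)} = !![E - V i, -1; 1, 0]`. -/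
def transferMatrix (E : ℝ) (V : ℤ → ℝ) : ℕ → Matrix (Fin 2) (Fin 2) ℝ
  | 0 => 1
  | n + 1 => !![E - V n, -1; 1, 0] * transferMatrix E V n

/-- The discriminant `Δ(E) = tr T_p^{(E,V)}` of a `p`-periodic potential. -/
def discriminant (V : ℤ → ℝ) (p : ℕ) (E : ℝ) : ℝ :=
  (transferMatrix E V p).trace

/-!
Write `d t = E - V (l + t)`. Then `E - A` is the tridiagonal matrix with diagonal `d` and
off-diagonal entries `-1`, plus the corner entries `-α = -e^{-ikp}` and `-β = -e^{ikp}`. The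
determinant is affine in each corner entry: the cofactor of a single corner is a triangular minor
with diagonal `-1`, and that of both corners is a smaller tridiagonal determinant. With `K` the
continuant this gives `K_p(d₀, …, d_{p-1}) - α - β - αβ K_{p-2}(d₁, …, d_{p-2})`. The transfer
matrix `T_p` has continuants as entries, so its trace is the same expression without `α` and `β`,
and shifting the potential by `l` only conjugates `T_p` when `V` is `p`-periodic. Finally
`αβ = 1` and `α + β = 2 cos (kp)`.
-/

open Matrix

namespace Matrix

variable {R n : Type*} [CommRing R] [Fintype n] [DecidableEq n]

lemma det_add_single (M : Matrix n n R) (i j : n) (a : R) :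
    (M + single i j a).det = M.det + a * (M.updateCol j (Pi.single i 1)).det := by
  have h : M + single i j a = M.updateCol j ((fun k => M k j) + a • Pi.single i 1) := by
    ext k l
    by_cases hl : l = j
    · subst hl; simp [single_apply, Pi.single_apply, eq_comm]
    · simp [hl, Ne.symm hl]
  rw [h, det_updateCol_add, updateCol_eq_self, det_updateCol_smul]

lemma det_add_single_add_single (M : Matrix n n R) {i j : n} (hij : i ≠ j) (a b : R) :
    (M + single i j a + single j i b).det = M.det + a * (M.updateCol j (Pi.single i 1)).det
      + b * (M.updateCol i (Pi.single j 1)).det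
      + a * b * ((M.updateCol i (Pi.single j 1)).updateCol j (Pi.single i 1)).det := by
  have h : (M + single i j a).updateCol i (Pi.single j 1)
      = M.updateCol i (Pi.single j 1) + single i j a := by
    ext k l
    by_cases hl : l = i
    · subst hl; simp [hij.symm]
    · simp [single_apply, hl]
  rw [det_add_single, det_add_single, h, det_add_single]
  ring

lemma det_updateCol_single {m : ℕ} (M : Matrix (Fin (m + 1)) (Fin (m + 1)) R)
    (i j : Fin (m + 1)) :
    (M.updateCol j (Pi.single i 1)).det
      = (-1) ^ (i + j : ℕ) * (M.submatrix i.succAbove j.succAbove).det := by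
  rw [det_succ_column _ j, Fintype.sum_eq_single i]
  · simp [submatrix_updateCol_succAbove]
  · intro k hk
    simp [hk]

end Matrix

section Tridiagonal

variable {R : Type*} [CommRing R]

def continuant (d : ℕ → R) : ℕ → R
  | 0 => 1
  | 1 => d 0
  | n + 2 => d 0 * continuant (fun i => d (i + 1)) (n + 1) - continuant (fun i => d (i + 2)) n

lemma map_continuant {S : Type*} [CommRing S] (f : R →+* S) :
    ∀ (d : ℕ → R) (n : ℕ), f (continuant d n) = continuant (fun t => f (d t)) n
  | d, 0 => by simp [continuant]
  | d, 1 => by simp [continuant]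
  | d, n + 2 => by
    rw [continuant, continuant, map_sub, map_mul, map_continuant f _ (n + 1),
      map_continuant f _ n]

def tridiagEntry (d : ℕ → R) (i j : ℕ) : R :=
  if i = j then d i else if i + 1 = j ∨ j + 1 = i then -1 else 0

def tridiagMatrix (d : ℕ → R) (n : ℕ) : Matrix (Fin n) (Fin n) R :=
  of fun i j => tridiagEntry d i j

lemma tridiagEntry_succ_succ (d : ℕ → R) (i j : ℕ) :
    tridiagEntry d (i + 1) (j + 1) = tridiagEntry (fun t => d (t + 1)) i j := by
  simp only [tridiagEntry, add_left_inj]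

lemma tridiagEntry_eq_zero {d : ℕ → R} {i j : ℕ} (h : i + 1 < j ∨ j + 1 < i) :
    tridiagEntry d i j = 0 := by
  rw [tridiagEntry, if_neg (by omega), if_neg (by omega)]

lemma tridiagEntry_succ_left (d : ℕ → R) (i : ℕ) : tridiagEntry d (i + 1) i = -1 := by
  simp [tridiagEntry]

lemma tridiagEntry_succ_right (d : ℕ → R) (i : ℕ) : tridiagEntry d i (i + 1) = -1 := by
  simp [tridiagEntry]

lemma tridiagMatrix_submatrix_succ (d : ℕ → R) (n : ℕ) :
    (tridiagMatrix d (n + 1)).submatrix Fin.succ Fin.succ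
      = tridiagMatrix (fun t => d (t + 1)) n := by
  ext i j
  simp [tridiagMatrix, tridiagEntry_succ_succ]

theorem det_tridiagMatrix : ∀ (d : ℕ → R) (n : ℕ), (tridiagMatrix d n).det = continuant d n
  | d, 0 => by simp [continuant]
  | d, 1 => by simp [tridiagMatrix, tridiagEntry, continuant]
  | d, n + 2 => by
    have hminor : ((tridiagMatrix d (n + 2)).submatrix Fin.succ (Fin.succ 0).succAbove).det
        = -continuant (fun t => d (t + 2)) n := by
      rw [det_succ_column_zero, Fin.sum_univ_succ, Finset.sum_eq_zero]
      · have hsucc : (Fin.succ 0 : Fin (n + 2)).succAbove ∘ Fin.succ = Fin.succ ∘ Fin.succ :=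
          funext fun j => Fin.succ_succAbove_succ 0 j
        rw [Fin.succAbove_zero, submatrix_submatrix, hsucc, ← submatrix_submatrix,
          tridiagMatrix_submatrix_succ, tridiagMatrix_submatrix_succ, det_tridiagMatrix]
        simp [tridiagMatrix, tridiagEntry]
      · intro i _
        simp [tridiagMatrix, tridiagEntry_eq_zero]
    rw [det_succ_row_zero, Fin.sum_univ_succ, Fin.sum_univ_succ, Finset.sum_eq_zero, continuant,
      Fin.succAbove_zero, tridiagMatrix_submatrix_succ, det_tridiagMatrix, hminor]
    · simp [tridiagMatrix, tridiagEntry]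
      ring
    · intro j _
      simp [tridiagMatrix, tridiagEntry_eq_zero]

lemma det_tridiagMatrix_submatrix_succ_castSucc (d : ℕ → R) (n : ℕ) :
    ((tridiagMatrix d (n + 1)).submatrix Fin.succ Fin.castSucc).det = (-1) ^ n := by
  rw [det_of_isUpperTriangular]
  · simp [tridiagMatrix, tridiagEntry_succ_left]
  · intro i j (hij : j < i)
    simp only [tridiagMatrix, submatrix_apply, of_apply, Fin.val_succ, Fin.val_castSucc]
    exact tridiagEntry_eq_zero (Or.inr (by omega))

lemma det_tridiagMatrix_submatrix_castSucc_succ (d : ℕ → R) (n : ℕ) :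
    ((tridiagMatrix d (n + 1)).submatrix Fin.castSucc Fin.succ).det = (-1) ^ n := by
  rw [det_of_isLowerTriangular]
  · simp [tridiagMatrix, tridiagEntry_succ_right]
  · intro i j (hij : i < j)
    simp only [tridiagMatrix, submatrix_apply, of_apply, Fin.val_succ, Fin.val_castSucc]
    exact tridiagEntry_eq_zero (Or.inl (by omega))

lemma det_tridiagMatrix_updateCol_last (d : ℕ → R) (n : ℕ) :
    ((tridiagMatrix d (n + 2)).updateCol (Fin.last (n + 1)) (Pi.single 0 1)).det = 1 := by
  rw [det_updateCol_single, Fin.succAbove_zero, Fin.succAbove_last,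
    det_tridiagMatrix_submatrix_succ_castSucc]
  simp [← pow_add, ← two_mul, pow_mul]

lemma det_tridiagMatrix_updateCol_zero (d : ℕ → R) (n : ℕ) :
    ((tridiagMatrix d (n + 2)).updateCol 0 (Pi.single (Fin.last (n + 1)) 1)).det = 1 := by
  rw [det_updateCol_single, Fin.succAbove_zero, Fin.succAbove_last,
    det_tridiagMatrix_submatrix_castSucc_succ]
  simp [← pow_add, ← two_mul, pow_mul]

lemma det_tridiagMatrix_updateCol_zero_updateCol_last (d : ℕ → R) (n : ℕ) :
    (((tridiagMatrix d (n + 2)).updateCol 0 (Pi.single (Fin.last (n + 1)) 1)).updateCol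
      (Fin.last (n + 1)) (Pi.single 0 1)).det = -continuant (fun t => d (t + 1)) n := by
  have hcol : ((tridiagMatrix d (n + 2)).updateCol 0 (Pi.single (Fin.last (n + 1)) 1)).submatrix
      Fin.succ Fin.castSucc = ((tridiagMatrix d (n + 2)).submatrix Fin.succ Fin.castSucc).updateCol
        0 (Pi.single (Fin.last n) 1) := by
    ext i j
    rcases eq_or_ne j 0 with rfl | hj
    · simp [Pi.single_apply, Fin.ext_iff]
    · simp [hj, Fin.castSucc_ne_zero_iff.mpr hj]
  have hminor : ((tridiagMatrix d (n + 2)).submatrix Fin.succ Fin.castSucc).submatrix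
      Fin.castSucc Fin.succ = tridiagMatrix (fun t => d (t + 1)) n := by
    ext i j
    simp [tridiagMatrix, tridiagEntry_succ_succ]
  rw [det_updateCol_single, Fin.succAbove_zero, Fin.succAbove_last, hcol, det_updateCol_single,
    Fin.succAbove_zero, Fin.succAbove_last, hminor, det_tridiagMatrix]
  simp only [Fin.val_zero, Fin.val_last, zero_add, add_zero]
  rw [← mul_assoc, ← pow_add, Odd.neg_one_pow ⟨n, by ring⟩, neg_one_mul]

theorem det_tridiagMatrix_add_corners (d : ℕ → R) (n : ℕ) (a b : R) :
    (tridiagMatrix d (n + 2) + single 0 (Fin.last (n + 1)) a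
        + single (Fin.last (n + 1)) 0 b).det
      = continuant d (n + 2) + a + b - a * b * continuant (fun t => d (t + 1)) n := by
  rw [det_add_single_add_single _ Fin.last_pos.ne, det_tridiagMatrix,
    det_tridiagMatrix_updateCol_last, det_tridiagMatrix_updateCol_zero,
    det_tridiagMatrix_updateCol_zero_updateCol_last]
  ring

end Tridiagonal

section Transfer

lemma transferMatrix_succ_eq_mul (E : ℝ) (W : ℤ → ℝ) (n : ℕ) :
    transferMatrix E W (n + 1)
      = transferMatrix E (fun t => W (t + 1)) n * !![E - W 0, -1; 1, 0] := by
  induction n with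
  | zero => simp [transferMatrix]
  | succ n ih =>
    rw [transferMatrix, ih, transferMatrix, ← Matrix.mul_assoc]
    push_cast
    rfl

lemma transferMatrix_eq_continuant (E : ℝ) (W : ℤ → ℝ) (n : ℕ) :
    transferMatrix E W (n + 2) =
      !![continuant (fun t : ℕ => E - W t) (n + 2),
          -continuant (fun t : ℕ => E - W ↑(t + 1)) (n + 1);
        continuant (fun t : ℕ => E - W t) (n + 1),
          -continuant (fun t : ℕ => E - W ↑(t + 1)) n] := by
  induction n generalizing W with
  | zero =>
    simp [transferMatrix, continuant]
    ring
  | succ n ih =>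
    rw [transferMatrix_succ_eq_mul, ih, mul_fin_two,
      continuant.eq_3 _ (n + 1), continuant.eq_3 (fun t : ℕ => E - W t) n]
    simp only [Nat.cast_add, Nat.cast_one, Nat.cast_ofNat, Nat.cast_zero, add_assoc,
      one_add_one_eq_two]
    ext i j
    fin_cases i <;> fin_cases j <;> simp <;> ring

lemma trace_transferMatrix (E : ℝ) (W : ℤ → ℝ) (n : ℕ) :
    (transferMatrix E W (n + 2)).trace
      = continuant (fun t : ℕ => E - W t) (n + 2)
        - continuant (fun t : ℕ => E - W ↑(t + 1)) n := by
  rw [transferMatrix_eq_continuant, trace_fin_two_of, sub_eq_add_neg]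

/-- `T_p(W(· + 1)) S_0 = S_p T_p(W)`, so `T_p(W(· + 1))` is conjugate to `T_p(W)` once
`W p = W 0`. -/
lemma trace_transferMatrix_shift (E : ℝ) (W : ℤ → ℝ) {p : ℕ} (hp : 0 < p) (hW : W p = W 0) :
    (transferMatrix E (fun t => W (t + 1)) p).trace = (transferMatrix E W p).trace := by
  obtain ⟨q, rfl⟩ := Nat.exists_eq_add_one_of_ne_zero hp.ne'
  rw [transferMatrix_succ_eq_mul E W q, trace_mul_comm (transferMatrix E _ q), transferMatrix]
  push_cast at hW
  rw [hW]

lemma trace_transferMatrix_comp_add (E : ℝ) (V : ℤ → ℝ) {p : ℕ} (hp : 0 < p)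
    (hV : ∀ n : ℤ, V (n + p) = V n) (l : ℤ) :
    (transferMatrix E (fun t => V (l + t)) p).trace = (transferMatrix E V p).trace := by
  have hper : Function.Periodic
      (fun l : ℤ => (transferMatrix E (fun t => V (l + t)) p).trace) 1 := by
    intro l
    have hshift := trace_transferMatrix_shift E (fun t => V (l + t)) hp (by simp [hV])
    simp only [add_assoc, add_comm (1 : ℤ)] at hshift ⊢
    exact hshift
  simpa using hper.int_mul_eq l

end Transfer

/-- For `p ≥ 2`, a `p`-periodic `V : ℤ → ℝ`, `k ∈ ℝ`, `l ∈ ℤ`,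
let `A_l^k` be the `p × p` complex matrix with diagonal entries
`V(l), …, V(l+p-1)`, entries `1` on the first sub- and superdiagonal, entry
`e^{-ikp}` in the upper-right corner and `e^{ikp}` in the lower-left corner
(entries on overlapping positions being added), and all other entries `0`.
Then `det(E·I - A_l^k) = Δ(E) - 2 cos(kp)` for every `E ∈ ℝ`, where `Δ` is the
discriminant of `V`. -/
theorem statement12
    (p : ℕ) (hp : 2 ≤ p) (V : ℤ → ℝ) (hV : ∀ n : ℤ, V (n + p) = V n)
    (k : ℝ) (l : ℤ) (A : Matrix (Fin p) (Fin p) ℂ)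
    (hA : ∀ i j : Fin p,
      A i j = (if i = j then (V (l + (i : ℕ)) : ℂ) else 0)
        + (if (i : ℕ) + 1 = (j : ℕ) then 1 else 0)
        + (if (j : ℕ) + 1 = (i : ℕ) then 1 else 0)
        + (if (i : ℕ) = 0 ∧ (j : ℕ) = p - 1 then
            Complex.exp (-(Complex.I * k * p)) else 0)
        + (if (j : ℕ) = 0 ∧ (i : ℕ) = p - 1 then
            Complex.exp (Complex.I * k * p) else 0))
    (E : ℝ) :
    ((E : ℂ) • (1 : Matrix (Fin p) (Fin p) ℂ) - A).det
      = (discriminant V p E : ℂ) - 2 * Real.cos (k * p) := by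
  obtain ⟨n, rfl⟩ : ∃ n, p = n + 2 := ⟨p - 2, by omega⟩
  set d : ℕ → ℝ := fun t => E - V (l + t) with hd
  set α := Complex.exp (-(Complex.I * k * (n + 2 : ℕ))) with hα
  set β := Complex.exp (Complex.I * k * (n + 2 : ℕ)) with hβ
  have hmat : (E : ℂ) • (1 : Matrix (Fin (n + 2)) (Fin (n + 2)) ℂ) - A
      = tridiagMatrix (fun t => (d t : ℂ)) (n + 2) + single 0 (Fin.last (n + 1)) (-α)
        + single (Fin.last (n + 1)) 0 (-β) := by
    ext i j
    simp only [Matrix.sub_apply, Matrix.smul_apply, one_apply, hA, Matrix.add_apply,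
      single_apply, tridiagMatrix, tridiagEntry, of_apply, hd, Fin.ext_iff, Fin.val_zero,
      Fin.val_last]
    split_ifs <;> first | omega | push_cast; ring
  have hαβ : α * β = 1 := by rw [← Complex.exp_add, neg_add_cancel, Complex.exp_zero]
  have hcos : α + β = 2 * Real.cos (k * (n + 2 : ℕ)) := by
    rw [hα, hβ, Complex.ofReal_cos, Complex.two_cos, add_comm]
    congr 1 <;> congr 1 <;> push_cast <;> ring
  have hΔ : discriminant V (n + 2) E
      = continuant d (n + 2) - continuant (fun t => d (t + 1)) n := by
    rw [discriminant, ← trace_transferMatrix_comp_add E V (by omega) hV l, trace_transferMatrix]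
  have hcast (d : ℕ → ℝ) (m : ℕ) : continuant (fun t => (d t : ℂ)) m = continuant d m :=
    (map_continuant Complex.ofRealHom d m).symm
  rw [hmat, det_tridiagMatrix_add_corners, hΔ, Complex.ofReal_sub]
  simp only [hcast]
  linear_combination (-((continuant (fun t => d (t + 1)) n : ℝ) : ℂ)) * hαβ - hcos
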